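/- Let 𝓕 with norm ‖·‖ be as above, let 𝓕_{CEN} = {F ∈ 𝓕 : F(x) < 1/x for all x > 0}, and let 𝓕_{CEN1} = {F ∈ 𝓕_{CEN} : ∃ x_H > 0 with F(x_H) = 0 and F(x) < 0 for all x > x_H}. Then 𝓕_{CEN1} is open in 𝓕. -/

import Mathlib

/-! Every `G ∈ 𝓕` is antitone with `G 0 = 1/2`, so `G < 1/x` on `(0, 2)` for free. For `x ≥ 2`
the norm controls `G x - F x < ε x`. Pick `x₁ > max 2 x_H`, so `F x₁ < 0`. On the compact interval
`[2, x₁]` the gap `1/x - F x` is at least some `l > 0`, which survives if `ε x₁ ≤ l`; beyond `x₁`,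
`G x ≤ G x₁ < F x₁ + ε x₁ ≤ 0` as soon as `ε x₁ ≤ -F x₁`.

The norm is a supremum of reals, which is `0` on unbounded sets; members of `𝓕` are convex and
bounded above, hence of at most linear growth, and this makes the supremum a genuine bound. -/

def MemF (F : ℝ → ℝ) : Prop :=
  ContDiff ℝ 2 F ∧ F 0 = 1/2 ∧
  (∀ x ≥ (0:ℝ), deriv F x ≤ 0) ∧
  (∀ x ≥ (0:ℝ), deriv (deriv F) x ≥ 0) ∧
  (∀ x ≥ (0:ℝ), x^2 * deriv (deriv F) x + 2*x*deriv F x - 2*F x + 1 ≥ 0) ∧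
  (∀ x ≥ (0:ℝ), 2*x*deriv F x - 2*F x + 1 ≥ 0) ∧
  (∀ x ≥ (0:ℝ), -(x^2 * deriv (deriv F) x) + 2*x*deriv F x - 2*F x + 1 ≥ 0)

noncomputable def Fnorm (F : ℝ → ℝ) : ℝ :=
  sSup ((fun x => |F x|) '' Set.Ico (0:ℝ) 2) +
  sSup ((fun x => |F x / x|) '' Set.Ici (2:ℝ))

def NS1 (F : ℝ → ℝ) : Prop :=
  ∃ x₀ > (0:ℝ), ∃ x₁ > x₀, F x₀ = 1/x₀ ∧ F x₁ > 1/x₁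

def CEN (F : ℝ → ℝ) : Prop := ∀ x > (0:ℝ), F x < 1/x

def CEN1 (F : ℝ → ℝ) : Prop :=
  CEN F ∧ ∃ xH > (0:ℝ), F xH = 0 ∧ ∀ x > xH, F x < 0

open Set

namespace MemF

variable {H : ℝ → ℝ}

lemma antitoneOn (h : MemF H) : AntitoneOn H (Ici 0) :=
  antitoneOn_of_deriv_nonpos (convex_Ici 0) h.1.continuous.continuousOn
    (h.1.differentiable two_ne_zero).differentiableOn
    fun x hx => h.2.2.1 x (interior_subset hx)

lemma le_half (h : MemF H) {x : ℝ} (hx : 0 ≤ x) : H x ≤ 1 / 2 :=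
  h.2.1 ▸ h.antitoneOn self_mem_Ici hx hx

lemma convexOn (h : MemF H) : ConvexOn ℝ (Ici 0) H := by
  have hd : ContDiff ℝ 1 (deriv H) := ((contDiff_succ_iff_deriv (n := 1)).mp h.1).2.2
  exact convexOn_of_deriv2_nonneg (convex_Ici 0) h.1.continuous.continuousOn
    (h.1.differentiable two_ne_zero).differentiableOn
    (hd.differentiable one_ne_zero).differentiableOn
    fun x hx => h.2.2.2.1 x (interior_subset hx)

lemma tangent_le (h : MemF H) {x : ℝ} (hx : 2 ≤ x) : H 2 + deriv H 2 * (x - 2) ≤ H x := by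
  rcases hx.eq_or_lt with rfl | hx
  · simp
  · have hslope := h.convexOn.deriv_le_slope (by norm_num : (2 : ℝ) ∈ Ici 0)
      (by simp only [mem_Ici]; linarith) hx (h.1.differentiable two_ne_zero 2)
    rw [slope_def_field, le_div_iff₀ (by linarith)] at hslope
    linarith

lemma exists_abs_le_affine (h : MemF H) : ∃ A B : ℝ, ∀ x ≥ 2, |H x| ≤ A + B * x := by
  refine ⟨1 / 2 + |H 2| + 2 * |deriv H 2|, |deriv H 2|, fun x hx => abs_le.2 ⟨?_, ?_⟩⟩
  · have hd : -|deriv H 2| * x ≤ deriv H 2 * x :=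
      mul_le_mul_of_nonneg_right (neg_abs_le _) (by linarith)
    linarith [h.tangent_le hx, neg_abs_le (H 2), le_abs_self (deriv H 2)]
  · linarith [h.le_half (by linarith : (0 : ℝ) ≤ x), abs_nonneg (H 2), abs_nonneg (deriv H 2),
      mul_nonneg (abs_nonneg (deriv H 2)) (by linarith : (0 : ℝ) ≤ x)]

end MemF

lemma bddAbove_abs_div_of_abs_le_affine {f : ℝ → ℝ} {A B : ℝ} (hf : ∀ x ≥ 2, |f x| ≤ A + B * x) :
    BddAbove ((fun x => |f x / x|) '' Ici 2) := by
  refine ⟨|A| / 2 + B, ?_⟩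
  rintro _ ⟨x, hx : (2 : ℝ) ≤ x, rfl⟩
  dsimp only
  rw [abs_div, abs_of_pos (a := x) (by linarith), div_le_iff₀ (by linarith)]
  nlinarith [hf x hx, le_abs_self A, abs_nonneg A]

lemma abs_div_le_Fnorm {f : ℝ → ℝ} (hf : BddAbove ((fun x => |f x / x|) '' Ici 2)) {x : ℝ}
    (hx : 2 ≤ x) : |f x / x| ≤ Fnorm f := by
  have hnear : 0 ≤ sSup ((fun x => |f x|) '' Ico (0 : ℝ) 2) :=
    Real.sSup_nonneg (by rintro _ ⟨y, -, rfl⟩; exact abs_nonneg _)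
  have hfar := le_csSup hf ⟨x, hx, rfl⟩
  unfold Fnorm
  linarith

lemma MemF.sub_lt_mul_of_Fnorm_lt {F G : ℝ → ℝ} (hF : MemF F) (hG : MemF G) {ε : ℝ}
    (hε : Fnorm (fun x => F x - G x) < ε) {x : ℝ} (hx : 2 ≤ x) : G x - F x < ε * x := by
  obtain ⟨A, B, hAB⟩ := hF.exists_abs_le_affine
  obtain ⟨A', B', hAB'⟩ := hG.exists_abs_le_affine
  have hbdd : BddAbove ((fun x => |(F x - G x) / x|) '' Ici 2) :=
    bddAbove_abs_div_of_abs_le_affine (A := A + A') (B := B + B') fun y hy =>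
      calc |F y - G y| ≤ |F y| + |G y| := abs_sub _ _
        _ ≤ A + B * y + (A' + B' * y) := add_le_add (hAB y hy) (hAB' y hy)
        _ = A + A' + (B + B') * y := by ring
  have hlt := (abs_lt.1 ((abs_div_le_Fnorm hbdd hx).trans_lt hε)).1
  rw [lt_div_iff₀ (by linarith)] at hlt
  linarith

theorem stmt_10 (F : ℝ → ℝ) (hF : MemF F) (hC : CEN1 F) :
    ∃ ε > (0:ℝ), ∀ G : ℝ → ℝ, MemF G →
      Fnorm (fun x => F x - G x) < ε → CEN G := by
  obtain ⟨hCEN, xH, -, -, hneg⟩ := hC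
  obtain ⟨x₁, hx₁, hxH⟩ : ∃ x₁, 2 < x₁ ∧ xH < x₁ :=
    ⟨max 2 xH + 1, by linarith [le_max_left 2 xH], by linarith [le_max_right 2 xH]⟩
  have hFx₁ : F x₁ < 0 := hneg x₁ hxH
  obtain ⟨l, hl, hgap⟩ : ∃ l, 0 < l ∧ ∀ x ∈ Icc 2 x₁, l ≤ 1 / x - F x :=
    isCompact_Icc.exists_forall_le'
      ((continuousOn_const.div continuousOn_id fun x hx => by
        simp only [id]; linarith [hx.1]).sub hF.1.continuous.continuousOn)
      fun x hx => sub_pos.2 (hCEN x (by linarith [hx.1]))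
  set ε := min (l / x₁) (-F x₁ / x₁)
  refine ⟨ε, lt_min (by positivity) (div_pos (by linarith) (by linarith)), ?_⟩
  intro G hG hclose x hx
  have hpert := fun y (hy : 2 ≤ y) => hF.sub_lt_mul_of_Fnorm_lt hG hclose hy
  rcases lt_or_ge x 2 with hx2 | hx2
  · exact (hG.le_half hx.le).trans_lt (by rw [lt_div_iff₀ hx]; linarith)
  rcases le_or_gt x x₁ with hxx₁ | hxx₁
  · have hεx : ε * x ≤ l :=
      calc ε * x ≤ l / x₁ * x₁ := mul_le_mul (min_le_left _ _) hxx₁ (by linarith) (by positivity)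
        _ = l := div_mul_cancel₀ l (by linarith)
    linarith [hpert x hx2, hgap x ⟨hx2, hxx₁⟩]
  · have hεx₁ : ε * x₁ ≤ -F x₁ :=
      calc ε * x₁ ≤ -F x₁ / x₁ * x₁ := mul_le_mul_of_nonneg_right (min_le_right _ _) (by linarith)
        _ = -F x₁ := div_mul_cancel₀ _ (by linarith)
    calc G x ≤ G x₁ := hG.antitoneOn (mem_Ici.2 (by linarith)) (mem_Ici.2 (by linarith)) hxx₁.le
      _ < 0 := by linarith [hpert x₁ hx₁.le]
      _ < 1 / x := by positivity
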